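/- arXiv:2308.02758 — 2 statements merged into one kernel-verified Lean document; each statement's English description precedes it below -/
import Mathlib

section
/- For smooth axisymmetric subsonic flows with u_x > 0, the axisymmetric steady Euler system is equivalent to the deformation-curl system: (c²(H,A) − u_x²)∂_x u_x + (c²(H,A) − u_r²)∂_r u_r − u_x u_r(∂_x u_r + ∂_r u_x) + u_r (c²(H,A) + u_θ²)/r = 0; u_x(∂_x u_r − ∂_r u_x) = u_θ∂_r u_θ + u_θ²/r + ((B − ½|u|²)/(Aγ))∂_r A − ∂_r B; (u_x∂_x + u_r∂_r)(ru_θ) = 0; (u_x∂_x + u_r∂_r)A = 0; (u_x∂_x + u_r∂_r)B = 0, where the density is represented through the Bernoulli function as ρ = H(B, A, |u|²) = ((γ−1)(B − ½|u|²)/(Aγ))^{1/(γ−1)}. -/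
noncomputable section
open Real Set MeasureTheory

namespace ContactDisc

variable {E F : Type*} [NormedAddCommGroup E] [NormedSpace ℝ E]
  [NormedAddCommGroup F] [NormedSpace ℝ F]

/-- The set of weighted sup values `δ_x^{max(i+k,0)} |D^i u(x)|`, `x ∈ D`,
where `δ_x` is the distance from `x` to the boundary portion `P`. -/
def wSupSet (i : ℕ) (k : ℝ) (D P : Set E) (u : E → F) : Set ℝ :=
  {t | ∃ x ∈ D, t = Metric.infDist x P ^ max ((i : ℝ) + k) 0 * ‖iteratedFDeriv ℝ i u x‖}

/-- The set of weighted Hölder quotients of the `m`-th derivative. -/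
def wSemiSet (m : ℕ) (α k : ℝ) (D P : Set E) (u : E → F) : Set ℝ :=
  {t | ∃ x ∈ D, ∃ y ∈ D, x ≠ y ∧
    t = min (Metric.infDist x P) (Metric.infDist y P) ^ max ((m : ℝ) + α + k) 0 *
        (‖iteratedFDeriv ℝ m u x - iteratedFDeriv ℝ m u y‖ / ‖x - y‖ ^ α)}

/-- The weighted Hölder norm `‖u‖_{m,α;D}^{(k,P)}`. -/
def wNorm (m : ℕ) (α k : ℝ) (D P : Set E) (u : E → F) : ℝ :=
  (∑ i ∈ Finset.range (m + 1), sSup (wSupSet i k D P u)) + sSup (wSemiSet m α k D P u)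

/-- Membership in the weighted Hölder space `C_{m,α}^{(k,P)}(D)`. -/
def MemW (m : ℕ) (α k : ℝ) (D P : Set E) (u : E → F) : Prop :=
  ContDiffOn ℝ m u D ∧ (∀ i ≤ m, BddAbove (wSupSet i k D P u)) ∧
    BddAbove (wSemiSet m α k D P u)

def hSupSet (i : ℕ) (D : Set E) (u : E → F) : Set ℝ :=
  {t | ∃ x ∈ D, t = ‖iteratedFDeriv ℝ i u x‖}

def hSemiSet (m : ℕ) (α : ℝ) (D : Set E) (u : E → F) : Set ℝ :=
  {t | ∃ x ∈ D, ∃ y ∈ D, x ≠ y ∧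
    t = ‖iteratedFDeriv ℝ m u x - iteratedFDeriv ℝ m u y‖ / ‖x - y‖ ^ α}

/-- The Hölder norm `‖u‖_{m,α;D}`. -/
def hNorm (m : ℕ) (α : ℝ) (D : Set E) (u : E → F) : ℝ :=
  (∑ i ∈ Finset.range (m + 1), sSup (hSupSet i D u)) + sSup (hSemiSet m α D u)

/-- Membership in the Hölder space `C^{m,α}(D)`. -/
def MemH (m : ℕ) (α : ℝ) (D : Set E) (u : E → F) : Prop :=
  ContDiffOn ℝ m u D ∧ (∀ i ≤ m, BddAbove (hSupSet i D u)) ∧ BddAbove (hSemiSet m α D u)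

/-- Partial derivative in the first (axial) variable. -/
def dx (u : ℝ × ℝ → ℝ) (p : ℝ × ℝ) : ℝ := fderiv ℝ u p (1, 0)

/-- Partial derivative in the second (radial/Lagrangian) variable. -/
def dr (u : ℝ × ℝ → ℝ) (p : ℝ × ℝ) : ℝ := fderiv ℝ u p (0, 1)

/-- The Lagrangian domain `Ω = (0,L) × (0, 1/2)`. -/
def Om (L : ℝ) : Set (ℝ × ℝ) := Ioo 0 L ×ˢ Ioo 0 (1 / 2)

/-- The (straightened) contact discontinuity `Σ = (0,L) × {1/2}`. -/
def Sig (L : ℝ) : Set (ℝ × ℝ) := Ioo 0 L ×ˢ {(1 / 2 : ℝ)}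

/-- The density represented through the Bernoulli function:
`H(B,A,q²) = ((γ-1)(B - q²/2)/(Aγ))^{1/(γ-1)}`. -/
def Hd (γ B A q2 : ℝ) : ℝ := ((γ - 1) * (B - q2 / 2) / (A * γ)) ^ (1 / (γ - 1))

/-- Square of the sound speed `c²(ρ,A) = Aγρ^{γ-1}`. -/
def cSq (γ ρ A : ℝ) : ℝ := A * γ * ρ ^ (γ - 1)

/-- Background entropy `A_b = P_b/ρ_b^γ`. -/
def Ab (γ ρb Pb : ℝ) : ℝ := Pb / ρb ^ γ

/-- Background Bernoulli quantity `B_b = u_b²/2 + γP_b/((γ-1)ρ_b)`. -/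
def Bb (γ ρb ub Pb : ℝ) : ℝ := ub ^ 2 / 2 + γ * Pb / ((γ - 1) * ρb)

/-- Background mass flux `J_b = ρ_b u_b`. -/
def Jb (ρb ub : ℝ) : ℝ := ρb * ub

/-- Background Mach number squared `(M_b)² = u_b²/c²(ρ_b, A_b)`. -/
def Mb2 (γ ρb ub Pb : ℝ) : ℝ := ub ^ 2 / cSq γ ρb (Ab γ ρb Pb)

/-- Background inner subsonic state. -/
structure Background (γ ρb ub Pb L α : ℝ) : Prop where
  hγ : 1 < γ
  hρb : 0 < ρb
  hub : 0 < ub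
  hPb : 0 < Pb
  subsonic : ub ^ 2 < γ * Pb / ρb
  normalized : ρb * ub = 2
  hL : 0 < L
  hα : α ∈ Ioo (1 / 2 : ℝ) 1

/-- Entrance data transported to the Lagrangian variable (paper (3-12)). -/
def tData (J0 f : ℝ → ℝ) (y : ℝ) : ℝ := f (Real.sqrt (∫ s in (0:ℝ)..y, 2 * s / J0 s))

/-- Size of the perturbation of the entrance data:
`σ_cd = ‖(J₀,ν₀,A₀,B₀) - (J_b,0,A_b,B_b)‖_{1,α;[0,1/2]}`. -/
def sigmaCD (α γ ρb ub Pb : ℝ) (J0 ν0 A0 B0 : ℝ → ℝ) : ℝ :=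
  hNorm 1 α (Icc (0:ℝ) (1/2)) (fun r => J0 r - Jb ρb ub) +
  hNorm 1 α (Icc (0:ℝ) (1/2)) ν0 +
  hNorm 1 α (Icc (0:ℝ) (1/2)) (fun r => A0 r - Ab γ ρb Pb) +
  hNorm 1 α (Icc (0:ℝ) (1/2)) (fun r => B0 r - Bb γ ρb ub Pb)

/-- `C^{1,α}` distance of two sets of entrance data. -/
def dataDist (α : ℝ) (J0 ν0 A0 B0 J0' ν0' A0' B0' : ℝ → ℝ) : ℝ :=
  hNorm 1 α (Icc (0:ℝ) (1/2)) (fun r => J0 r - J0' r) +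
  hNorm 1 α (Icc (0:ℝ) (1/2)) (fun r => ν0 r - ν0' r) +
  hNorm 1 α (Icc (0:ℝ) (1/2)) (fun r => A0 r - A0' r) +
  hNorm 1 α (Icc (0:ℝ) (1/2)) (fun r => B0 r - B0' r)

/-- `C^{1,α}` regularity of the entrance data. -/
def MemData (α : ℝ) (J0 ν0 A0 B0 : ℝ → ℝ) : Prop :=
  MemH 1 α (Icc (0:ℝ) (1/2)) J0 ∧ MemH 1 α (Icc (0:ℝ) (1/2)) ν0 ∧
  MemH 1 α (Icc (0:ℝ) (1/2)) A0 ∧ MemH 1 α (Icc (0:ℝ) (1/2)) B0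

/-- The density `ρ̂ = H(B̃₀, Ã₀, |u|²)` expressed through the perturbation `W`. -/
def rhoW (γ ub : ℝ) (tA0 tB0 : ℝ → ℝ) (W1 W2 W3 : ℝ × ℝ → ℝ) (p : ℝ × ℝ) : ℝ :=
  Hd γ (tB0 p.2) (tA0 p.2) ((W1 p + ub) ^ 2 + W2 p ^ 2 + W3 p ^ 2)

/-- The modified radius `r̂(y₁,y₂) = (2∫₀^{y₂} 2s/(ρ̂ u_x)(y₁,s) ds)^{1/2}`. -/
def rW (γ ub : ℝ) (tA0 tB0 : ℝ → ℝ) (W1 W2 W3 : ℝ × ℝ → ℝ) (p : ℝ × ℝ) : ℝ :=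
  Real.sqrt (2 * ∫ s in (0:ℝ)..p.2,
    2 * s / (rhoW γ ub tA0 tB0 W1 W2 W3 (p.1, s) * (W1 (p.1, s) + ub)))

/-- `Λ̂(y₂) = (2∫₀^{y₂} 2s/J̃₀(s) ds)^{1/2} ν̃₀(y₂)`. -/
def LamHat (tJ0 tν0 : ℝ → ℝ) (y : ℝ) : ℝ :=
  Real.sqrt (2 * ∫ s in (0:ℝ)..y, 2 * s / tJ0 s) * tν0 y

/-- The swirl velocity `W₃ = Λ̂(y₂)/r̂(y₁,y₂)` determined by the angular momentum. -/
def swirlW (γ ub : ℝ) (tJ0 tν0 tA0 tB0 : ℝ → ℝ) (W1 W2 W3 : ℝ × ℝ → ℝ) (p : ℝ × ℝ) : ℝ :=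
  LamHat tJ0 tν0 p.2 / rW γ ub tA0 tB0 W1 W2 W3 p

/-- Membership in the iteration set `J(δ₁)`. -/
structure InJball (L α δ1 : ℝ) (W1 W2 W3 : ℝ × ℝ → ℝ) : Prop where
  mem1 : MemW 1 α (-α) (Om L) (Sig L) W1
  mem2 : MemW 1 α (-α) (Om L) (Sig L) W2
  mem3 : MemW 1 α (-α) (Om L) (Sig L) W3
  small : wNorm 1 α (-α) (Om L) (Sig L) W1 + wNorm 1 α (-α) (Om L) (Sig L) W2 +
      wNorm 1 α (-α) (Om L) (Sig L) W3 ≤ δ1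
  bc2axis : ∀ y1 : ℝ, W2 (y1, 0) = 0
  bc2exit : ∀ y2 : ℝ, W2 (L, y2) = 0
  bc3axis : ∀ y1 : ℝ, W3 (y1, 0) = 0

/-- The nonlinear interior remainder `F₁(Ŵ,∇Ŵ,Â,B̂)` (paper, Section 4.1). -/
def F1fun (γ ρb ub Pb : ℝ) (tA0 tB0 : ℝ → ℝ) (W1 W2 W3 : ℝ × ℝ → ℝ) (p : ℝ × ℝ) : ℝ :=
  let ρ := rhoW γ ub tA0 tB0 W1 W2 W3 p
  let r := rW γ ub tA0 tB0 W1 W2 W3 p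
  let c2 := cSq γ ρ (tA0 p.2)
  let c2b := cSq γ ρb (Ab γ ρb Pb)
  let Bh := tB0 p.2 - Bb γ ρb ub Pb
  (c2 - (ub + W1 p) ^ 2) * (r * ρ * W2 p / (2 * p.2)) * dr W1 p
  + W2 p ^ 2 * (r * ρ * (ub + W1 p) / (2 * p.2)) * dr W2 p
  - (c2 / r - c2b / p.2) * W2 p
  - ((γ - 1) * Bh - (γ + 1) / 2 * W1 p ^ 2 - (γ - 1) / 2 * W2 p ^ 2
      - (γ - 1) / 2 * W3 p ^ 2 - (γ + 1) * ub * W1 p) * dx W1 p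
  - ((γ - 1) * Bh - (γ - 1) / 2 * W1 p ^ 2 - (γ - 1) / 2 * W2 p ^ 2
      - (γ - 1) / 2 * W3 p ^ 2 - (γ - 1) * ub * W1 p) * dr W2 p
  - W3 p ^ 2 / r * W2 p
  + (W1 p + ub) * W2 p *
      (dx W2 p - r * ρ * W2 p / (2 * p.2) * dr W2 p + r * ρ * (W1 p + ub) / (2 * p.2) * dr W1 p)

/-- The nonlinear interior remainder `F₂(Ŵ,∇Ŵ,Â,B̂)` (paper, Section 4.1). -/
def F2fun (γ ub : ℝ) (tA0 tB0 : ℝ → ℝ) (W1 W2 W3 : ℝ × ℝ → ℝ) (p : ℝ × ℝ) : ℝ :=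
  let ρ := rhoW γ ub tA0 tB0 W1 W2 W3 p
  let r := rW γ ub tA0 tB0 W1 W2 W3 p
  1 / (ub + W1 p) *
    (r * ρ * (W1 p + ub) / (2 * p.2) * W3 p * dr W3 p + W3 p ^ 2 / r
      + r * ρ * (W1 p + ub) / (2 * p.2) * (ρ ^ (γ - 1) / (γ - 1)) * deriv tA0 p.2
      - r * ρ * (W1 p + ub) / (2 * p.2) * deriv tB0 p.2)
  + 1 / (ub + W1 p) * (r * ρ * W2 p / (2 * p.2) * dr W2 p)

/-- The entrance boundary remainder `F₃(Ŵ,Ĵ,Â,B̂)` (paper, Section 4.1). -/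
def F3fun (γ ρb ub Pb : ℝ) (tJ0 tA0 tB0 : ℝ → ℝ) (W1 W2 W3 : ℝ × ℝ → ℝ) (y : ℝ) : ℝ :=
  let M2 := Mb2 γ ρb ub Pb
  let ρhat := rhoW γ ub tA0 tB0 W1 W2 W3 (0, y)
  let ρ0 := Hd γ (Bb γ ρb ub Pb) (Ab γ ρb Pb) (ub ^ 2)
  (tJ0 y - Jb ρb ub) / (ρb * (1 - M2))
  - W1 (0, y) / (ρb * (1 - M2)) * (ρhat - ρ0)
  - ub / (ρb * (1 - M2)) * (ρhat - ρ0 + Jb ρb ub / cSq γ ρb (Ab γ ρb Pb) * W1 (0, y))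

/-- The kinematic boundary term `F₄(Ŵ, g_cd) = (u_b + Ŵ₁) g_cd'` on `Σ`. -/
def F4fun (ub : ℝ) (W1 : ℝ × ℝ → ℝ) (w : ℝ → ℝ) (y1 : ℝ) : ℝ :=
  (ub + W1 (y1, 1/2)) * w y1

/-- The linear boundary value problem (4-6). -/
structure SolvesLinear (L M2 : ℝ) (G1 G2 : ℝ × ℝ → ℝ) (G3 G4 : ℝ → ℝ)
    (W1 W2 : ℝ × ℝ → ℝ) : Prop where
  eq1 : ∀ p ∈ Om L, (1 - M2) * dx W1 p + dr W2 p + W2 p / p.2 = G1 p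
  eq2 : ∀ p ∈ Om L, dx W2 p - dr W1 p = G2 p
  bc0 : ∀ y ∈ Ioo (0:ℝ) (1/2), W1 (0, y) = G3 y
  bcL : ∀ y ∈ Ioo (0:ℝ) (1/2), W2 (L, y) = 0
  bcS : ∀ y1 ∈ Ioo (0:ℝ) L, W2 (y1, 1/2) = G4 y1
  bcA : ∀ y1 ∈ Ioo (0:ℝ) L, W2 (y1, 0) = 0

/-- The density as a function of the Lagrangian velocity components. -/
def rhoU (γ : ℝ) (tA0 tB0 : ℝ → ℝ) (ux ur uθ : ℝ × ℝ → ℝ) (p : ℝ × ℝ) : ℝ :=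
  Hd γ (tB0 p.2) (tA0 p.2) (ux p ^ 2 + ur p ^ 2 + uθ p ^ 2)

/-- The radius as a nonlocal function of the Lagrangian velocity (paper (3-10)). -/
def rU (γ : ℝ) (tA0 tB0 : ℝ → ℝ) (ux ur uθ : ℝ × ℝ → ℝ) (p : ℝ × ℝ) : ℝ :=
  Real.sqrt (2 * ∫ s in (0:ℝ)..p.2, 2 * s / (rhoU γ tA0 tB0 ux ur uθ (p.1, s) * ux (p.1, s)))

/-- First equation of the nonlinear system (3-20). -/
def NLeq1 (γ : ℝ) (tA0 tB0 : ℝ → ℝ) (ux ur uθ : ℝ × ℝ → ℝ) (p : ℝ × ℝ) : Prop :=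
  let ρ := rhoU γ tA0 tB0 ux ur uθ p
  let r := rU γ tA0 tB0 ux ur uθ p
  let c2 := cSq γ ρ (tA0 p.2)
  let Kx := r * ρ * ux p / (2 * p.2)
  let Kr := r * ρ * ur p / (2 * p.2)
  (c2 - ux p ^ 2) * (dx ux p - Kr * dr ux p) + (c2 - ur p ^ 2) * (Kx * dr ur p)
    + c2 / r * ur p + uθ p ^ 2 / r * ur p
    = ux p * ur p * (dx ur p - Kr * dr ur p + Kx * dr ux p)

/-- Second equation of the nonlinear system (3-20). -/
def NLeq2 (γ : ℝ) (tA0 tB0 : ℝ → ℝ) (ux ur uθ : ℝ × ℝ → ℝ) (p : ℝ × ℝ) : Prop :=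
  let ρ := rhoU γ tA0 tB0 ux ur uθ p
  let r := rU γ tA0 tB0 ux ur uθ p
  let Kx := r * ρ * ux p / (2 * p.2)
  let Kr := r * ρ * ur p / (2 * p.2)
  ux p * (dx ur p - Kr * dr ur p - Kx * dr ux p)
    = Kx * uθ p * dr uθ p + uθ p ^ 2 / r + Kx * (ρ ^ (γ - 1) / (γ - 1)) * deriv tA0 p.2
      - Kx * deriv tB0 p.2

/-- Third equation of the nonlinear system (3-20): `∂_{y₁}(r u_θ) = 0`. -/
def NLeq3 (γ : ℝ) (tA0 tB0 : ℝ → ℝ) (ux ur uθ : ℝ × ℝ → ℝ) (p : ℝ × ℝ) : Prop :=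
  fderiv ℝ (fun q => rU γ tA0 tB0 ux ur uθ q * uθ q) p (1, 0) = 0

/-- The nonlinear boundary value problem (3-20)–(3-21). -/
structure SolvesNonlinear (γ L : ℝ) (tJ0 tν0 tA0 tB0 w : ℝ → ℝ)
    (ux ur uθ : ℝ × ℝ → ℝ) : Prop where
  eq1 : ∀ p ∈ Om L, NLeq1 γ tA0 tB0 ux ur uθ p
  eq2 : ∀ p ∈ Om L, NLeq2 γ tA0 tB0 ux ur uθ p
  eq3 : ∀ p ∈ Om L, NLeq3 γ tA0 tB0 ux ur uθ p
  bcJ : ∀ y ∈ Ioo (0:ℝ) (1/2), rhoU γ tA0 tB0 ux ur uθ (0, y) * ux (0, y) = tJ0 y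
  bcν : ∀ y ∈ Ioo (0:ℝ) (1/2), uθ (0, y) = tν0 y
  bcL : ∀ y ∈ Ioo (0:ℝ) (1/2), ur (L, y) = 0
  bcS : ∀ y1 ∈ Ioo (0:ℝ) L, ur (y1, 1/2) = ux (y1, 1/2) * w y1
  bcA : ∀ y1 ∈ Ioo (0:ℝ) L, ur (y1, 0) = 0

/-- The nonlinear problem in perturbation form (5-8), for entrance data `(J₀,ν₀,A₀,B₀)`
and contact discontinuity slope `w`. -/
structure SolvesPert (γ ρb ub Pb L : ℝ) (J0 ν0 A0 B0 w : ℝ → ℝ)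
    (W1 W2 W3 : ℝ × ℝ → ℝ) : Prop where
  swirl : ∀ p ∈ Om L, W3 p =
    swirlW γ ub (tData J0 J0) (tData J0 ν0) (tData J0 A0) (tData J0 B0) W1 W2 W3 p
  lin : SolvesLinear L (Mb2 γ ρb ub Pb)
    (fun p => F1fun γ ρb ub Pb (tData J0 A0) (tData J0 B0) W1 W2 W3 p / cSq γ ρb (Ab γ ρb Pb))
    (F2fun γ ub (tData J0 A0) (tData J0 B0) W1 W2 W3)
    (F3fun γ ρb ub Pb (tData J0 J0) (tData J0 A0) (tData J0 B0) W1 W2 W3)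
    (fun y1 => (ub + W1 (y1, 1/2)) * w y1) W1 W2

/-- The linearized problem (5-15) at `(W, w)` in the direction `w₁`, with solution `Z`. -/
structure SolvesLinearized (γ ρb ub Pb L : ℝ) (J0 ν0 A0 B0 w w1 : ℝ → ℝ)
    (W1 W2 W3 Z1 Z2 Z3 : ℝ × ℝ → ℝ) : Prop where
  swirl : ∀ p ∈ Om L, Z3 p = deriv (fun t : ℝ =>
    swirlW γ ub (tData J0 J0) (tData J0 ν0) (tData J0 A0) (tData J0 B0)
      (fun q => W1 q + t * Z1 q) (fun q => W2 q + t * Z2 q) (fun q => W3 q + t * Z3 q) p) 0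
  eq1 : ∀ p ∈ Om L, (1 - Mb2 γ ρb ub Pb) * dx Z1 p + dr Z2 p + Z2 p / p.2 =
    deriv (fun t : ℝ => F1fun γ ρb ub Pb (tData J0 A0) (tData J0 B0)
      (fun q => W1 q + t * Z1 q) (fun q => W2 q + t * Z2 q) (fun q => W3 q + t * Z3 q) p /
        cSq γ ρb (Ab γ ρb Pb)) 0
  eq2 : ∀ p ∈ Om L, dx Z2 p - dr Z1 p =
    deriv (fun t : ℝ => F2fun γ ub (tData J0 A0) (tData J0 B0)
      (fun q => W1 q + t * Z1 q) (fun q => W2 q + t * Z2 q) (fun q => W3 q + t * Z3 q) p) 0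
  bc0 : ∀ y ∈ Ioo (0:ℝ) (1/2), Z1 (0, y) =
    deriv (fun t : ℝ => F3fun γ ρb ub Pb (tData J0 J0) (tData J0 A0) (tData J0 B0)
      (fun q => W1 q + t * Z1 q) (fun q => W2 q + t * Z2 q) (fun q => W3 q + t * Z3 q) y) 0
  bcL : ∀ y ∈ Ioo (0:ℝ) (1/2), Z2 (L, y) = 0
  bcS : ∀ y1 ∈ Ioo (0:ℝ) L, Z2 (y1, 1/2) = (ub + W1 (y1, 1/2)) * w1 y1 + Z1 (y1, 1/2) * w y1
  bcA : ∀ y1 ∈ Ioo (0:ℝ) L, Z2 (y1, 0) = 0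

/-- The pressure `N(W₁,W₂,W₃,Ã₀,B̃₀) = Ã₀(1/2) ρ(...)^γ` evaluated on `y₂ = 1/2`. -/
def Npress (γ ub : ℝ) (J0 A0 B0 : ℝ → ℝ) (W1 W2 W3 : ℝ × ℝ → ℝ) (y1 : ℝ) : ℝ :=
  tData J0 A0 (1/2) * rhoW γ ub (tData J0 A0) (tData J0 B0) W1 W2 W3 (y1, 1/2) ^ γ

/-- The derivative `D_wQ(φ₀,w)(w₁) = Σ_j ∂_{W_j}N · W_j⁰` along the linearized solution `Z`. -/
def DQfun (γ ub : ℝ) (J0 A0 B0 : ℝ → ℝ) (W1 W2 W3 Z1 Z2 Z3 : ℝ × ℝ → ℝ) (y1 : ℝ) : ℝ :=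
  deriv (fun t : ℝ => Npress γ ub J0 A0 B0 (fun q => W1 q + t * Z1 q)
    (fun q => W2 q + t * Z2 q) (fun q => W3 q + t * Z3 q) y1) 0

/-- The steady axisymmetric Euler system (2-2) at a point `p = (x,r)`, with
entropy `A = P/ρ^γ`. -/
def EulerAx (γ : ℝ) (ρ ux ur uθ P : ℝ × ℝ → ℝ) (p : ℝ × ℝ) : Prop :=
  dx (fun q => ρ q * ux q) p + dr (fun q => ρ q * ur q) p + ρ p * ur p / p.2 = 0 ∧
  ρ p * (ux p * dx ux p + ur p * dr ux p) + dx P p = 0 ∧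
  ρ p * (ux p * dx ur p + ur p * dr ur p) - ρ p * uθ p ^ 2 / p.2 + dr P p = 0 ∧
  ρ p * (ux p * dx (fun q => q.2 * uθ q) p + ur p * dr (fun q => q.2 * uθ q) p) = 0 ∧
  ρ p * (ux p * dx (fun q => P q / ρ q ^ γ) p + ur p * dr (fun q => P q / ρ q ^ γ) p) = 0

/-- The deformation-curl system (3-17) at a point, where the density is
represented through the Bernoulli function. -/
def DCAx (γ : ℝ) (ux ur uθ A B : ℝ × ℝ → ℝ) (p : ℝ × ℝ) : Prop :=
  let q2 := ux p ^ 2 + ur p ^ 2 + uθ p ^ 2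
  let ρ := Hd γ (B p) (A p) q2
  let c2 := cSq γ ρ (A p)
  ((c2 - ux p ^ 2) * dx ux p + (c2 - ur p ^ 2) * dr ur p
      - ux p * ur p * (dx ur p + dr ux p) + ur p * (c2 + uθ p ^ 2) / p.2 = 0) ∧
  (ux p * (dx ur p - dr ux p) = uθ p * dr uθ p + uθ p ^ 2 / p.2
      + (B p - q2 / 2) / (A p * γ) * dr A p - dr B p) ∧
  (ux p * dx (fun q => q.2 * uθ q) p + ur p * dr (fun q => q.2 * uθ q) p = 0) ∧
  (ux p * dx A p + ur p * dr A p = 0) ∧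
  (ux p * dx B p + ur p * dr B p = 0)

/-- Three-dimensional Euclidean space. -/
abbrev E3 := EuclideanSpace ℝ (Fin 3)

/-- Standard basis of `ℝ³`. -/
def e3 : Fin 3 → E3 := fun i => EuclideanSpace.single i 1

/-- Distance to the `x₁`-axis. -/
def R3 (p : E3) : ℝ := Real.sqrt (p 1 ^ 2 + p 2 ^ 2)

/-- A cylindrical function viewed as a function on `ℝ³`. -/
def cyl3 (f : ℝ × ℝ → ℝ) (p : E3) : ℝ := f (p 0, R3 p)

/-- The Cartesian components of the axisymmetric velocity field
`u = u_x e_x + u_r e_r + u_θ e_θ`. -/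
def u3comp (uxc urc uθc : ℝ × ℝ → ℝ) (i : Fin 3) (p : E3) : ℝ :=
  if i = 0 then cyl3 uxc p
  else if i = 1 then cyl3 urc p * (p 1 / R3 p) - cyl3 uθc p * (p 2 / R3 p)
  else cyl3 urc p * (p 2 / R3 p) + cyl3 uθc p * (p 1 / R3 p)

/-- The classical three-dimensional steady full Euler system at the point `p`. -/
def Euler3Classical (γ : ℝ) (ρ3 P3 : E3 → ℝ) (u3 : Fin 3 → E3 → ℝ) (p : E3) : Prop :=
  (∑ i, fderiv ℝ (fun q => ρ3 q * u3 i q) p (e3 i)) = 0 ∧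
  (∀ j, (∑ i, fderiv ℝ (fun q => ρ3 q * u3 i q * u3 j q) p (e3 i)) +
    fderiv ℝ P3 p (e3 j) = 0) ∧
  (∑ i, fderiv ℝ (fun q => ρ3 q * u3 i q * ((∑ j, u3 j q ^ 2) / 2 + P3 q / ((γ - 1) * ρ3 q))
      + u3 i q * P3 q) p (e3 i)) = 0

end ContactDisc

/-!
With `ρ = H(B, A, |u|²)` one has `c² = (γ - 1)(B - |u|²/2)`, and differentiating `P = Aρ^γ`
gives `∇P = ρ (∇B - ∇|u|²/2) - ρ (B - |u|²/2)/(Aγ) ∇A`. Divided by `ρ`, the radial momentum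
equation is then exactly the vorticity equation, and the axial one is the Crocco relation
`u_r ω_θ = ∂_x B - u_θ ∂_x u_θ - (B - |u|²/2)/(Aγ) ∂_x A`. Since `u_x·(axial) - u_r·(radial)` is
a combination of the transport equations of `B`, `r u_θ` and `A`, and `u_x ≠ 0`, the axial
equation may be traded for the transport of `B`. Once `A` and `B` are transported, `∇ρ` involves
only the velocity gradient, and the continuity equation times `(γ - 1)(B - |u|²/2)/ρ` is the
deformation equation.
-/

namespace ContactDisc

section BernoulliDensity

variable {γ b a s : ℝ}

theorem Hd_rpow_sub_one (hγ : 1 < γ) (ha : 0 ≤ a) (hs : 0 ≤ b - s / 2) :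
    Hd γ b a s ^ (γ - 1) = (γ - 1) * (b - s / 2) / (a * γ) := by
  have : 0 ≤ (γ - 1) * (b - s / 2) / (a * γ) := by
    have := sub_pos.mpr hγ; positivity
  rw [Hd, ← Real.rpow_mul this, one_div, inv_mul_cancel₀ (sub_pos.mpr hγ).ne', Real.rpow_one]

theorem Hd_pos (hγ : 1 < γ) (ha : 0 < a) (hs : 0 < b - s / 2) : 0 < Hd γ b a s := by
  have := sub_pos.mpr hγ
  unfold Hd; positivity

theorem cSq_Hd (hγ : 1 < γ) (ha : 0 < a) (hs : 0 ≤ b - s / 2) :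
    cSq γ (Hd γ b a s) a = (γ - 1) * (b - s / 2) := by
  have : γ ≠ 0 := by positivity
  rw [cSq, Hd_rpow_sub_one hγ ha.le hs]
  field_simp

theorem Hd_rpow (hγ : 1 < γ) (ha : 0 < a) (hs : 0 < b - s / 2) :
    Hd γ b a s ^ γ = Hd γ b a s * ((γ - 1) * (b - s / 2) / (a * γ)) := by
  rw [← Hd_rpow_sub_one hγ ha.le hs.le, ← Real.rpow_one_add' (Hd_pos hγ ha hs).le (by linarith),
    add_sub_cancel]

end BernoulliDensity

section Derivatives

variable {E : Type*} [NormedAddCommGroup E] [NormedSpace ℝ E] {γ : ℝ} {b a s : E → ℝ}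
  {b' a' s' : E →L[ℝ] ℝ} {p : E}

theorem hasFDerivAt_Hd (hγ : 1 < γ) (hb : HasFDerivAt b b' p) (ha : HasFDerivAt a a' p)
    (hs : HasFDerivAt s s' p) (ha₀ : 0 < a p) (hs₀ : 0 < b p - s p / 2) :
    HasFDerivAt (fun x => Hd γ (b x) (a x) (s x))
      ((Hd γ (b p) (a p) (s p) / ((γ - 1) * (b p - s p / 2))) • (b' - (2⁻¹ : ℝ) • s') -
        (Hd γ (b p) (a p) (s p) / ((γ - 1) * a p)) • a') p := by
  have hbase : HasFDerivAt (fun x => (γ - 1) / γ * (b x - 2⁻¹ * s x) * (a x)⁻¹)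
      (((γ - 1) / γ * (b p - 2⁻¹ * s p)) • (-(a p ^ 2)⁻¹ • a') +
        (a p)⁻¹ • ((γ - 1) / γ) • (b' - (2⁻¹ : ℝ) • s')) p :=
    ((hb.sub (hs.const_mul 2⁻¹)).const_mul ((γ - 1) / γ)).mul
      ((hasDerivAt_inv ha₀.ne').comp_hasFDerivAt p ha)
  have hpos : 0 < (γ - 1) / γ * (b p - 2⁻¹ * s p) * (a p)⁻¹ := by
    have := sub_pos.mpr hγ
    rw [← div_eq_inv_mul]; positivity
  convert hbase.rpow_const (p := 1 / (γ - 1)) (Or.inl hpos.ne') using 1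
  · funext x; simp only [Hd]; congr 1; field_simp
  · have hg : (γ - 1) / γ * (b p - 2⁻¹ * s p) * (a p)⁻¹ =
        (γ - 1) * (b p - s p / 2) / (a p * γ) := by ring
    rw [Real.rpow_sub_one hpos.ne', hg]
    ext v
    simp only [sub_apply, add_apply, smul_apply, smul_eq_mul, Hd]
    generalize ((γ - 1) * (b p - s p / 2) / (a p * γ)) ^ (1 / (γ - 1)) = H
    have := ha₀.ne'
    have : b p * 2 - s p ≠ 0 := by linarith
    field_simp
    ring

theorem hasFDerivAt_mul_Hd_rpow (hγ : 1 < γ) (hb : HasFDerivAt b b' p)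
    (ha : HasFDerivAt a a' p) (hs : HasFDerivAt s s' p) (ha₀ : 0 < a p)
    (hs₀ : 0 < b p - s p / 2) :
    HasFDerivAt (fun x => a x * Hd γ (b x) (a x) (s x) ^ γ)
      (Hd γ (b p) (a p) (s p) • (b' - (2⁻¹ : ℝ) • s') -
        (Hd γ (b p) (a p) (s p) * (b p - s p / 2) / (a p * γ)) • a') p := by
  refine (ha.mul ((hasFDerivAt_Hd hγ hb ha hs ha₀ hs₀).rpow_const
    (Or.inr hγ.le))).congr_fderiv ?_
  rw [Hd_rpow_sub_one hγ ha₀.le hs₀.le, Hd_rpow hγ ha₀ hs₀]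
  ext v
  simp only [sub_apply, add_apply, smul_apply, smul_eq_mul]
  have := ha₀.ne'
  have : b p * 2 - s p ≠ 0 := by linarith
  have : γ - 1 ≠ 0 := (sub_pos.mpr hγ).ne'
  field_simp
  ring

end Derivatives

section PointwiseAlgebra

variable {γ H a e k r X R T Xx Xr Rx Rr Tx Tr Ax Ar Bx Br ρx ρr Px Pr : ℝ}

theorem axial_momentum_iff_crocco (hH : H ≠ 0)
    (hPx : Px = H * (Bx - (X * Xx + R * Rx + T * Tx)) - H * k * Ax) :
    H * (X * Xx + R * Xr) + Px = 0 ↔ R * (Rx - Xr) = Bx - T * Tx - k * Ax := by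
  rw [hPx]
  constructor
  · intro h
    apply mul_left_cancel₀ hH
    linear_combination -h
  · intro h
    linear_combination -H * h

theorem radial_momentum_iff_vorticity (hH : H ≠ 0)
    (hPr : Pr = H * (Br - (X * Xr + R * Rr + T * Tr)) - H * k * Ar) :
    H * (X * Rx + R * Rr) - H * T ^ 2 / r + Pr = 0 ↔
      X * (Rx - Xr) = T * Tr + T ^ 2 / r + k * Ar - Br := by
  rw [hPr]
  constructor
  · intro h
    apply mul_left_cancel₀ hH
    linear_combination h
  · intro h
    linear_combination H * h

theorem crocco_iff_bernoulli_transport (hX : X ≠ 0) (hr : r ≠ 0)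
    (hvort : X * (Rx - Xr) = T * Tr + T ^ 2 / r + k * Ar - Br)
    (hswirl : X * (r * Tx) + R * (T + r * Tr) = 0) (hA : X * Ax + R * Ar = 0) :
    R * (Rx - Xr) = Bx - T * Tx - k * Ax ↔ X * Bx + R * Br = 0 := by
  have hT : X * Tx + R * Tr = -(R * T / r) := by
    field_simp
    linear_combination hswirl
  constructor
  · intro h
    linear_combination (-X) * h + R * hvort + T * hT + k * hA
  · intro h
    apply mul_left_cancel₀ hX
    linear_combination R * hvort + T * hT + k * hA - h

theorem continuity_iff_deformation (hγ : γ ≠ 1) (hH : H ≠ 0) (ha : a ≠ 0) (he : e ≠ 0)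
    (hr : r ≠ 0)
    (hρx : ρx = H / ((γ - 1) * e) * (Bx - (X * Xx + R * Rx + T * Tx)) - H / ((γ - 1) * a) * Ax)
    (hρr : ρr = H / ((γ - 1) * e) * (Br - (X * Xr + R * Rr + T * Tr)) - H / ((γ - 1) * a) * Ar)
    (hswirl : X * (r * Tx) + R * (T + r * Tr) = 0) (hA : X * Ax + R * Ar = 0)
    (hB : X * Bx + R * Br = 0) :
    ρx * X + H * Xx + (ρr * R + H * Rr) + H * R / r = 0 ↔
      ((γ - 1) * e - X ^ 2) * Xx + ((γ - 1) * e - R ^ 2) * Rr - X * R * (Rx + Xr) +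
        R * ((γ - 1) * e + T ^ 2) / r = 0 := by
  have hγ₁ : γ - 1 ≠ 0 := sub_ne_zero.mpr hγ
  have key : (γ - 1) * e * (ρx * X + H * Xx + (ρr * R + H * Rr) + H * R / r) =
      H * (((γ - 1) * e - X ^ 2) * Xx + ((γ - 1) * e - R ^ 2) * Rr - X * R * (Rx + Xr) +
        R * ((γ - 1) * e + T ^ 2) / r) := by
    rw [hρx, hρr]
    field_simp
    linear_combination a * r * hB - e * r * hA - a * T * hswirl
  rw [← mul_eq_zero_iff_left (mul_ne_zero hγ₁ he), key, mul_eq_zero_iff_left hH]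

theorem euler_iff_deformation_curl (hγ : γ ≠ 1) (hH : H ≠ 0) (ha : a ≠ 0) (he : e ≠ 0)
    (hr : r ≠ 0) (hX : X ≠ 0)
    (hρx : ρx = H / ((γ - 1) * e) * (Bx - (X * Xx + R * Rx + T * Tx)) - H / ((γ - 1) * a) * Ax)
    (hρr : ρr = H / ((γ - 1) * e) * (Br - (X * Xr + R * Rr + T * Tr)) - H / ((γ - 1) * a) * Ar)
    (hPx : Px = H * (Bx - (X * Xx + R * Rx + T * Tx)) - H * (e / (a * γ)) * Ax)
    (hPr : Pr = H * (Br - (X * Xr + R * Rr + T * Tr)) - H * (e / (a * γ)) * Ar) :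
    (ρx * X + H * Xx + (ρr * R + H * Rr) + H * R / r = 0 ∧
      H * (X * Xx + R * Xr) + Px = 0 ∧
      H * (X * Rx + R * Rr) - H * T ^ 2 / r + Pr = 0 ∧
      H * (X * (r * Tx) + R * (T + r * Tr)) = 0 ∧
      H * (X * Ax + R * Ar) = 0) ↔
    (((γ - 1) * e - X ^ 2) * Xx + ((γ - 1) * e - R ^ 2) * Rr - X * R * (Rx + Xr) +
        R * ((γ - 1) * e + T ^ 2) / r = 0 ∧
      X * (Rx - Xr) = T * Tr + T ^ 2 / r + e / (a * γ) * Ar - Br ∧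
      X * (r * Tx) + R * (T + r * Tr) = 0 ∧
      X * Ax + R * Ar = 0 ∧
      X * Bx + R * Br = 0) := by
  rw [axial_momentum_iff_crocco hH hPx, radial_momentum_iff_vorticity hH hPr,
    mul_eq_zero_iff_left hH, mul_eq_zero_iff_left hH]
  constructor
  · rintro ⟨hmass, hcrocco, hvort, hswirl, hA⟩
    have hB := (crocco_iff_bernoulli_transport hX hr hvort hswirl hA).1 hcrocco
    exact ⟨(continuity_iff_deformation hγ hH ha he hr hρx hρr hswirl hA hB).1 hmass, hvort,
      hswirl, hA, hB⟩
  · rintro ⟨hdiv, hvort, hswirl, hA, hB⟩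
    exact ⟨(continuity_iff_deformation hγ hH ha he hr hρx hρr hswirl hA hB).2 hdiv,
      (crocco_iff_bernoulli_transport hX hr hvort hswirl hA).2 hB, hvort, hswirl, hA⟩

end PointwiseAlgebra

section PartialDerivatives

variable {f g : ℝ × ℝ → ℝ} {p : ℝ × ℝ}

theorem dx_mul (hf : DifferentiableAt ℝ f p) (hg : DifferentiableAt ℝ g p) :
    dx (fun q => f q * g q) p = dx f p * g p + f p * dx g p := by
  simp only [dx, fderiv_fun_mul hf hg, add_apply, smul_apply, smul_eq_mul]
  ring

theorem dr_mul (hf : DifferentiableAt ℝ f p) (hg : DifferentiableAt ℝ g p) :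
    dr (fun q => f q * g q) p = dr f p * g p + f p * dr g p := by
  simp only [dr, fderiv_fun_mul hf hg, add_apply, smul_apply, smul_eq_mul]
  ring

theorem dx_snd_mul (hf : DifferentiableAt ℝ f p) :
    dx (fun q => q.2 * f q) p = p.2 * dx f p := by
  rw [dx_mul differentiableAt_snd hf]
  simp [dx, fderiv_snd]

theorem dr_snd_mul (hf : DifferentiableAt ℝ f p) :
    dr (fun q => q.2 * f q) p = f p + p.2 * dr f p := by
  rw [dr_mul differentiableAt_snd hf]
  simp [dr, fderiv_snd]

end PartialDerivatives

theorem statement_4_general (γ : ℝ) (hγ : 1 < γ)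
    (ux ur uθ A B : ℝ × ℝ → ℝ)
    (huxreg : ContDiff ℝ 1 ux) (hurreg : ContDiff ℝ 1 ur) (huθreg : ContDiff ℝ 1 uθ)
    (hAreg : ContDiff ℝ 1 A) (hBreg : ContDiff ℝ 1 B)
    (hApos : ∀ q : ℝ × ℝ, 0 < A q)
    (hBpos : ∀ q : ℝ × ℝ, 0 < B q - (ux q ^ 2 + ur q ^ 2 + uθ q ^ 2) / 2)
    (hux : ∀ q : ℝ × ℝ, 0 < ux q) :
    (∀ q : ℝ × ℝ, 0 < q.2 →
      EulerAx γ (fun p => Hd γ (B p) (A p) (ux p ^ 2 + ur p ^ 2 + uθ p ^ 2)) ux ur uθ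
        (fun p => A p * Hd γ (B p) (A p) (ux p ^ 2 + ur p ^ 2 + uθ p ^ 2) ^ γ) q) ↔
    (∀ q : ℝ × ℝ, 0 < q.2 → DCAx γ ux ur uθ A B q) := by
  have hX := huxreg.differentiable one_ne_zero
  have hR := hurreg.differentiable one_ne_zero
  have hT := huθreg.differentiable one_ne_zero
  have hA := hAreg.differentiable one_ne_zero
  have hB := hBreg.differentiable one_ne_zero
  have hs := fun p => (((hX p).hasFDerivAt.pow 2).fun_add ((hR p).hasFDerivAt.pow 2)).fun_add
    ((hT p).hasFDerivAt.pow 2)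
  have hρ := fun p =>
    hasFDerivAt_Hd hγ (hB p).hasFDerivAt (hA p).hasFDerivAt (hs p) (hApos p) (hBpos p)
  have hP := fun p =>
    hasFDerivAt_mul_Hd_rpow hγ (hB p).hasFDerivAt (hA p).hasFDerivAt (hs p) (hApos p) (hBpos p)
  have hentropy : (fun p => A p * Hd γ (B p) (A p) (ux p ^ 2 + ur p ^ 2 + uθ p ^ 2) ^ γ /
      Hd γ (B p) (A p) (ux p ^ 2 + ur p ^ 2 + uθ p ^ 2) ^ γ) = A :=
    funext fun p => mul_div_cancel_right₀ _
      (Real.rpow_pos_of_pos (Hd_pos hγ (hApos p) (hBpos p)) γ).ne'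
  refine forall₂_congr fun q hq => ?_
  simp only [EulerAx, DCAx, hentropy, cSq_Hd hγ (hApos q) (hBpos q).le,
    dx_mul (hρ q).differentiableAt (hX q), dr_mul (hρ q).differentiableAt (hR q),
    dx_snd_mul (hT q), dr_snd_mul (hT q)]
  refine euler_iff_deformation_curl hγ.ne' (Hd_pos hγ (hApos q) (hBpos q)).ne' (hApos q).ne'
    (hBpos q).ne' hq.ne' (hux q).ne' ?_ ?_ ?_ ?_ <;>
  · simp only [dx, dr, (hρ q).fderiv, (hP q).fderiv, sub_apply, add_apply, smul_apply,
      smul_eq_mul, nsmul_eq_mul]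
    ring

/-- for smooth axisymmetric subsonic flows with `u_x > 0`, the
axisymmetric steady Euler system (with density represented through the Bernoulli
function as `ρ = H(B, A, |u|²)` and pressure `P = Aρ^γ`) is equivalent to the
deformation-curl system (3-17). -/
theorem statement_4 (γ : ℝ) (hγ : 1 < γ)
    (ux ur uθ A B : ℝ × ℝ → ℝ)
    (huxreg : ContDiff ℝ 1 ux) (hurreg : ContDiff ℝ 1 ur) (huθreg : ContDiff ℝ 1 uθ)
    (hAreg : ContDiff ℝ 1 A) (hBreg : ContDiff ℝ 1 B)
    (hApos : ∀ q : ℝ × ℝ, 0 < A q)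
    (hBpos : ∀ q : ℝ × ℝ, 0 < B q - (ux q ^ 2 + ur q ^ 2 + uθ q ^ 2) / 2)
    (hux : ∀ q : ℝ × ℝ, 0 < ux q)
    (hsubsonic : ∀ q : ℝ × ℝ, 0 < q.2 →
      ux q ^ 2 + ur q ^ 2 + uθ q ^ 2 <
        cSq γ (Hd γ (B q) (A q) (ux q ^ 2 + ur q ^ 2 + uθ q ^ 2)) (A q)) :
    (∀ q : ℝ × ℝ, 0 < q.2 →
      EulerAx γ (fun p => Hd γ (B p) (A p) (ux p ^ 2 + ur p ^ 2 + uθ p ^ 2)) ux ur uθ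
        (fun p => A p * Hd γ (B p) (A p) (ux p ^ 2 + ur p ^ 2 + uθ p ^ 2) ^ γ) q) ↔
    (∀ q : ℝ × ℝ, 0 < q.2 → DCAx γ ux ur uθ A B q) :=
  statement_4_general γ hγ ux ur uθ A B huxreg hurreg huθreg hAreg hBreg hApos hBpos hux

end ContactDisc
end
end

section
/- Let (ρ, u_x, u_r, u_θ) be a smooth axisymmetric flow in the inner region of the cylinder with ρu_x bounded between two positive constants, so that C₁r² ≤ ∫₀^r s ρu_x(x,s) ds ≤ C₂r² for positive constants C₁, C₂. Then the modified Lagrangian transformation y₁ = x, y₂(x,r) = (∫₀^r s ρ u_x(x,s) ds)^{1/2} has Jacobian ∂(y₁,y₂)/∂(x,r) = rρu_x/(2y₂) ≥ C₃ > 0 for some constant C₃, hence is invertible; moreover, under this transformation the free boundary r = g_cd(x) (where ∫₀^{g_cd(x)} sρu_x(x,s)ds = m² for all x) is mapped to the fixed straight line y₂ = m, and the radius is recovered by the formula r(y₁,y₂) = (2∫₀^{y₂} 2s/(ρu_x)(y₁,s) ds)^{1/2}. -/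
noncomputable section
open Real Set MeasureTheory

/-! Since `J = ρ u_x` is continuous and positive, `I(r) = ∫₀^r s J(s) ds` has derivative
`r J(r) > 0`, so `y₂ = √I` is strictly increasing with `y₂' = r J / (2 y₂)`, and `y₂ ≤ √C₂ r`
bounds this Jacobian below by `c₁ / (2 √C₂)`. A left inverse `R` of `y₂` is continuous on the
image of `[0, g]` (a continuous injection of a compact interval), so the substitution `s = y₂(t)`
is legitimate and turns `∫₀^{y₂(r)} 2 s / J(R s) ds` into `∫₀^r t dt = r² / 2`. -/

theorem IsCompact.continuousOn_image_of_leftInvOn {α β : Type*} [TopologicalSpace α]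
    [TopologicalSpace β] [T2Space β] {K : Set α} {φ : α → β} {R : β → α} (hK : IsCompact K)
    (hφ : ContinuousOn φ K) (hR : LeftInvOn R φ K) : ContinuousOn R (φ '' K) := by
  refine continuousOn_iff_isClosed.2 fun t ht =>
    ⟨φ '' (K ∩ t), ((hK.inter_right ht).image_of_continuousOn (hφ.mono inter_subset_left)).isClosed,
      ?_⟩
  ext y
  constructor
  · rintro ⟨hRy, x, hx, rfl⟩
    rw [mem_preimage, hR hx] at hRy
    exact ⟨⟨x, ⟨hx, hRy⟩, rfl⟩, x, hx, rfl⟩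
  · rintro ⟨⟨x, ⟨hx, hxt⟩, rfl⟩, -⟩
    exact ⟨by rwa [mem_preimage, hR hx], x, hx, rfl⟩

namespace ContactDisc

/-- The coordinate `y₂` on the section at a fixed `x`, with `J = ρ u_x (x, ·)`. -/
def lagrangeCoord (J : ℝ → ℝ) (r : ℝ) : ℝ := √(∫ s in (0:ℝ)..r, s * J s)

section LagrangeCoord

variable {J : ℝ → ℝ} {a r : ℝ}

theorem lagrangeCoord_zero (J : ℝ → ℝ) : lagrangeCoord J 0 = 0 := by
  simp [lagrangeCoord]

theorem hasDerivAt_integral_id_mul (hJ : Continuous J) (r : ℝ) :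
    HasDerivAt (fun t => ∫ s in (0:ℝ)..t, s * J s) (r * J r) r :=
  intervalIntegral.integral_hasDerivAt_right ((continuous_id.mul hJ).intervalIntegrable 0 r)
    ((continuous_id.mul hJ).stronglyMeasurableAtFilter _ _) (continuous_id.mul hJ).continuousAt

theorem continuous_lagrangeCoord (hJ : Continuous J) : Continuous (lagrangeCoord J) :=
  continuous_sqrt.comp <| continuous_iff_continuousAt.2 fun r =>
    (hasDerivAt_integral_id_mul hJ r).continuousAt

theorem integral_id_mul_pos (hJ : Continuous J) (hpos : ∀ s ∈ Icc 0 a, 0 < J s)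
    (hr : r ∈ Ioc 0 a) : 0 < ∫ s in (0:ℝ)..r, s * J s :=
  intervalIntegral.intervalIntegral_pos_of_pos_on ((continuous_id.mul hJ).intervalIntegrable 0 r)
    (fun s hs => mul_pos hs.1 (hpos s ⟨hs.1.le, hs.2.le.trans hr.2⟩)) hr.1

theorem hasDerivAt_lagrangeCoord (hJ : Continuous J) (hI : 0 < ∫ s in (0:ℝ)..r, s * J s) :
    HasDerivAt (lagrangeCoord J) (r * J r / (2 * lagrangeCoord J r)) r :=
  (hasDerivAt_integral_id_mul hJ r).sqrt hI.ne'

theorem strictMonoOn_lagrangeCoord (hJ : Continuous J) (hpos : ∀ s ∈ Icc 0 a, 0 < J s) :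
    StrictMonoOn (lagrangeCoord J) (Icc 0 a) := by
  refine strictMonoOn_of_deriv_pos (convex_Icc 0 a) (continuous_lagrangeCoord hJ).continuousOn
    fun t ht => ?_
  rw [interior_Icc] at ht
  have hI := integral_id_mul_pos hJ hpos ⟨ht.1, ht.2.le⟩
  rw [(hasDerivAt_lagrangeCoord hJ hI).deriv]
  exact div_pos (mul_pos ht.1 (hpos t ⟨ht.1.le, ht.2.le⟩)) (mul_pos two_pos (sqrt_pos.2 hI))

theorem div_sqrt_le_deriv_lagrangeCoord {c C : ℝ} (hc : 0 ≤ c) (hC : 0 < C) (hr : 0 < r)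
    (hJr : c ≤ J r) (hI : 0 < ∫ s in (0:ℝ)..r, s * J s)
    (hIC : ∫ s in (0:ℝ)..r, s * J s ≤ C * r ^ 2) :
    c / (2 * √C) ≤ r * J r / (2 * lagrangeCoord J r) := by
  have hY : lagrangeCoord J r ≤ √C * r := by
    calc lagrangeCoord J r ≤ √(C * r ^ 2) := sqrt_le_sqrt hIC
      _ = √C * r := by rw [sqrt_mul hC.le, sqrt_sq hr.le]
  calc c / (2 * √C) = r * c / (2 * (√C * r)) := by field_simp
    _ ≤ r * J r / (2 * lagrangeCoord J r) :=
      div_le_div₀ (mul_nonneg hr.le (hc.trans hJr)) (mul_le_mul_of_nonneg_left hJr hr.le)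
        (mul_pos two_pos (sqrt_pos.2 hI)) (by linarith)

theorem integral_lagrangeCoord_inverse (hJ : Continuous J) (hpos : ∀ s ∈ Icc 0 a, 0 < J s)
    {R : ℝ → ℝ} (hR : LeftInvOn R (lagrangeCoord J) (Icc 0 a)) (hr : r ∈ Icc 0 a) :
    ∫ s in (0:ℝ)..lagrangeCoord J r, 2 * s / J (R s) = r ^ 2 / 2 := by
  set Y := lagrangeCoord J
  have hYc := continuous_lagrangeCoord hJ
  have hsub : Icc 0 r ⊆ Icc 0 a := Icc_subset_Icc_right hr.2
  have hf : ContinuousOn (fun s => 2 * s / J (R s)) (Y '' Icc 0 a) := by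
    refine (continuousOn_const.mul continuousOn_id).div
      (hJ.comp_continuousOn (isCompact_Icc.continuousOn_image_of_leftInvOn hYc.continuousOn hR))
      ?_
    rintro _ ⟨t, ht, rfl⟩
    exact (hR ht).symm ▸ (hpos t ht).ne'
  have hfr : ContinuousOn (fun s => 2 * s / J (R s)) (Y '' Icc 0 r) := hf.mono (image_mono hsub)
  have hid : EqOn (fun t => ((fun s => 2 * s / J (R s)) ∘ Y) t * (t * J t / (2 * Y t)))
      (fun t => t) (Icc 0 r) := by
    intro t ht
    rcases ht.1.eq_or_lt with rfl | ht0
    · simp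
    have hYt : 0 < Y t := sqrt_pos.2 (integral_id_mul_pos hJ hpos ⟨ht0, ht.2.trans hr.2⟩)
    have hJt := (hpos t (hsub ht)).ne'
    simp only [Function.comp, hR (hsub ht)]
    field_simp
  have key := intervalIntegral.integral_comp_mul_deriv''' (a := 0) (b := r)
    (f' := fun t => t * J t / (2 * Y t)) (g := fun s => 2 * s / J (R s))
    (by rw [uIcc_of_le hr.1]; exact hYc.continuousOn)
    (fun t ht => by
      rw [min_eq_left hr.1, max_eq_right hr.1] at ht
      exact (hasDerivAt_lagrangeCoord hJ
        (integral_id_mul_pos hJ hpos ⟨ht.1, ht.2.le.trans hr.2⟩)).hasDerivWithinAt)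
    (by rw [min_eq_left hr.1, max_eq_right hr.1]; exact hfr.mono (image_mono Ioo_subset_Icc_self))
    (by rw [uIcc_of_le hr.1]
        exact hfr.integrableOn_compact (isCompact_Icc.image_of_continuousOn hYc.continuousOn))
    (by rw [uIcc_of_le hr.1]
        exact (continuous_id.integrableOn_Icc).congr_fun hid.symm measurableSet_Icc)
  rw [lagrangeCoord_zero] at key
  rw [← key, intervalIntegral.integral_congr (by rw [uIcc_of_le hr.1]; exact hid), integral_id]
  ring

end LagrangeCoord

theorem statement_5_general (L m c1 c2 C1 C2 : ℝ)
    (hm : 0 < m) (hc1 : 0 < c1)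
    (hC1 : 0 < C1) (hC12 : C1 ≤ C2)
    (g : ℝ → ℝ)
    (ρ ux : ℝ × ℝ → ℝ)
    (hcont : Continuous fun p : ℝ × ℝ => ρ p * ux p)
    (hbounds : ∀ x ∈ Ioo 0 L, ∀ r ∈ Icc 0 (g x),
      c1 ≤ ρ (x, r) * ux (x, r) ∧ ρ (x, r) * ux (x, r) ≤ c2)
    (hint : ∀ x ∈ Ioo 0 L, ∀ r ∈ Icc 0 (g x),
      C1 * r ^ 2 ≤ (∫ s in (0:ℝ)..r, s * (ρ (x, s) * ux (x, s))) ∧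
      (∫ s in (0:ℝ)..r, s * (ρ (x, s) * ux (x, s))) ≤ C2 * r ^ 2)
    (hmass : ∀ x ∈ Ioo 0 L, (∫ s in (0:ℝ)..(g x), s * (ρ (x, s) * ux (x, s))) = m ^ 2) :
    ∃ C3 > 0, ∀ x ∈ Ioo 0 L,
      (∀ r ∈ Ioo 0 (g x),
        HasDerivAt (fun t => Real.sqrt (∫ s in (0:ℝ)..t, s * (ρ (x, s) * ux (x, s))))
          (r * (ρ (x, r) * ux (x, r)) /
            (2 * Real.sqrt (∫ s in (0:ℝ)..r, s * (ρ (x, s) * ux (x, s))))) r ∧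
        C3 ≤ r * (ρ (x, r) * ux (x, r)) /
            (2 * Real.sqrt (∫ s in (0:ℝ)..r, s * (ρ (x, s) * ux (x, s))))) ∧
      InjOn (fun r => Real.sqrt (∫ s in (0:ℝ)..r, s * (ρ (x, s) * ux (x, s))))
        (Icc 0 (g x)) ∧
      Real.sqrt (∫ s in (0:ℝ)..(g x), s * (ρ (x, s) * ux (x, s))) = m ∧
      (∀ R : ℝ → ℝ,
        (∀ r ∈ Icc 0 (g x),
          R (Real.sqrt (∫ s in (0:ℝ)..r, s * (ρ (x, s) * ux (x, s)))) = r) →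
        ∀ r ∈ Icc 0 (g x),
          r = Real.sqrt (2 *
            ∫ s in (0:ℝ)..(Real.sqrt (∫ s in (0:ℝ)..r, s * (ρ (x, s) * ux (x, s)))),
              2 * s / (ρ (x, R s) * ux (x, R s)))) := by
  have hC2 : 0 < C2 := hC1.trans_le hC12
  refine ⟨c1 / (2 * √C2), div_pos hc1 (mul_pos two_pos (sqrt_pos.2 hC2)), fun x hx => ?_⟩
  set J := fun s => ρ (x, s) * ux (x, s)
  have hJ : Continuous J := hcont.comp (Continuous.prodMk_right x)
  have hpos : ∀ s ∈ Icc 0 (g x), 0 < J s := fun s hs => hc1.trans_le (hbounds x hx s hs).1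
  have hI : ∀ r ∈ Ioo 0 (g x), 0 < ∫ s in (0:ℝ)..r, s * J s := fun r hr =>
    integral_id_mul_pos hJ hpos ⟨hr.1, hr.2.le⟩
  refine ⟨fun r hr => ⟨hasDerivAt_lagrangeCoord hJ (hI r hr),
      div_sqrt_le_deriv_lagrangeCoord hc1.le hC2 hr.1 (hbounds x hx r (Ioo_subset_Icc_self hr)).1
        (hI r hr) (hint x hx r (Ioo_subset_Icc_self hr)).2⟩,
    (strictMonoOn_lagrangeCoord hJ hpos).injOn, by rw [hmass x hx, sqrt_sq hm.le], ?_⟩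
  intro R hR r hr
  have hinv := integral_lagrangeCoord_inverse hJ hpos hR hr
  dsimp only [lagrangeCoord, J] at hinv
  rw [hinv, mul_div_cancel₀ _ two_ne_zero, sqrt_sq hr.1]

/-- properties of the modified Lagrangian transformation
`y₁ = x`, `y₂(x,r) = (∫₀^r s ρu_x(x,s) ds)^{1/2}`: its Jacobian equals
`rρu_x/(2y₂)` and is bounded below by a positive constant `C₃` (hence the
transformation is invertible); the free boundary `r = g_cd(x)` is mapped onto the
fixed line `y₂ = m`; and the radius is recovered from any inverse `R` by
`r = (2∫₀^{y₂} 2s/(ρu_x) ds)^{1/2}`. -/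
theorem statement_5 (L m c1 c2 C1 C2 : ℝ)
    (hL : 0 < L) (hm : 0 < m) (hc1 : 0 < c1) (hc12 : c1 ≤ c2)
    (hC1 : 0 < C1) (hC12 : C1 ≤ C2)
    (g : ℝ → ℝ) (hg : ∀ x ∈ Ioo 0 L, 0 < g x)
    (ρ ux : ℝ × ℝ → ℝ)
    (hcont : Continuous fun p : ℝ × ℝ => ρ p * ux p)
    (hbounds : ∀ x ∈ Ioo 0 L, ∀ r ∈ Icc 0 (g x),
      c1 ≤ ρ (x, r) * ux (x, r) ∧ ρ (x, r) * ux (x, r) ≤ c2)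
    (hint : ∀ x ∈ Ioo 0 L, ∀ r ∈ Icc 0 (g x),
      C1 * r ^ 2 ≤ (∫ s in (0:ℝ)..r, s * (ρ (x, s) * ux (x, s))) ∧
      (∫ s in (0:ℝ)..r, s * (ρ (x, s) * ux (x, s))) ≤ C2 * r ^ 2)
    (hmass : ∀ x ∈ Ioo 0 L, (∫ s in (0:ℝ)..(g x), s * (ρ (x, s) * ux (x, s))) = m ^ 2) :
    ∃ C3 > 0, ∀ x ∈ Ioo 0 L,
      (∀ r ∈ Ioo 0 (g x),
        HasDerivAt (fun t => Real.sqrt (∫ s in (0:ℝ)..t, s * (ρ (x, s) * ux (x, s))))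
          (r * (ρ (x, r) * ux (x, r)) /
            (2 * Real.sqrt (∫ s in (0:ℝ)..r, s * (ρ (x, s) * ux (x, s))))) r ∧
        C3 ≤ r * (ρ (x, r) * ux (x, r)) /
            (2 * Real.sqrt (∫ s in (0:ℝ)..r, s * (ρ (x, s) * ux (x, s))))) ∧
      InjOn (fun r => Real.sqrt (∫ s in (0:ℝ)..r, s * (ρ (x, s) * ux (x, s))))
        (Icc 0 (g x)) ∧
      Real.sqrt (∫ s in (0:ℝ)..(g x), s * (ρ (x, s) * ux (x, s))) = m ∧
      (∀ R : ℝ → ℝ,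
        (∀ r ∈ Icc 0 (g x),
          R (Real.sqrt (∫ s in (0:ℝ)..r, s * (ρ (x, s) * ux (x, s)))) = r) →
        ∀ r ∈ Icc 0 (g x),
          r = Real.sqrt (2 *
            ∫ s in (0:ℝ)..(Real.sqrt (∫ s in (0:ℝ)..r, s * (ρ (x, s) * ux (x, s)))),
              2 * s / (ρ (x, R s) * ux (x, R s)))) :=
  statement_5_general L m c1 c2 C1 C2 hm hc1 hC1 hC12 g ρ ux hcont hbounds hint hmass

end ContactDisc
end
end
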